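/- arXiv:2604.14633 — 4 statements merged into one kernel-verified Lean document; each statement's English description precedes it below -/
import Mathlib

section
/- Let V be a finite vertex set, s, t ∈ V distinct vertices, and let G be a directed graph on V given by an arc set E ⊆ V × V. Assume G is strongly connected and contains the arc (t,s). Let f be a finite collection of pairwise arc-disjoint directed paths from s to t in G, none of which uses the arc (t,s), and let the residual graph G_f be the directed graph whose arc set is obtained from E by removing every arc used by a path of f and adding its reversal. If there is a directed path from s to t in G_f, then G_f is strongly connected. -/
/-!
Every arc `(a, b)` of `G` is still realised by a walk in `G_f`: either it survives in `G_f`, or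
it lies on some path `p ∈ f`, whose reversal sits in `G_f`. In the latter case walk backwards
along `p` from `a` to `s`, take the augmenting path from `s` to `t`, and walk backwards along `p`
from `t` to `b`. Hence reachability in `G` implies reachability in `G_f`.
-/

variable {V : Type*}

/-- The list of arcs traversed by a path given as a list of vertices. -/
def arcsOf (p : List V) : List (V × V) := p.zip p.tail

/-- `p` is a directed path from `s` to `t` in the arc set `E`: a finite sequence of
vertices starting at `s` and ending at `t` with each consecutive pair an arc of `E`. -/
def IsPath (E : Set (V × V)) (s t : V) (p : List V) : Prop :=
  p.head? = some s ∧ p.getLast? = some t ∧ ∀ a ∈ arcsOf p, a ∈ E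

/-- A directed graph (given by its arc set) is strongly connected if every ordered
pair of vertices is joined by a directed path. -/
def StronglyConnected (E : Set (V × V)) : Prop :=
  ∀ u v : V, Relation.ReflTransGen (fun a b : V => (a, b) ∈ E) u v

/-- The set of arcs used by a collection of paths `f`. -/
def usedArcs (f : List (List V)) : Set (V × V) :=
  {a | a ∈ (f.map arcsOf).flatten}

/-- The residual graph `G_f`: every arc used by a path of `f` is removed from `E`
and its reversal is added. -/
def residualGraph (E : Set (V × V)) (f : List (List V)) : Set (V × V) :=
  (E \ usedArcs f) ∪ (Prod.swap '' usedArcs f)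

open Relation

theorem isChain_iff_forall_mem_arcsOf {r : V → V → Prop} :
    ∀ {p : List V}, p.IsChain r ↔ ∀ a ∈ arcsOf p, r a.1 a.2
  | [] | [_] => by simp [arcsOf]
  | x :: y :: p => by
    rw [List.isChain_cons_cons, isChain_iff_forall_mem_arcsOf]
    simp [arcsOf]

section Chain

variable {r : V → V → Prop} {p : List V} {s t x : V}

theorem reflTransGen_of_head?_of_mem (hp : ∀ a ∈ arcsOf p, r a.1 a.2) (hs : p.head? = some s)
    (hx : x ∈ p) : ReflTransGen r s x :=
  (isChain_iff_forall_mem_arcsOf.2 hp).induction (ReflTransGen r s ·) p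
    (fun _ _ hxy hsx => hsx.tail hxy)
    (fun hne => by rw [List.head?_eq_some_head hne, Option.some.injEq] at hs; rw [hs]) x hx

theorem reflTransGen_of_getLast?_of_mem (hp : ∀ a ∈ arcsOf p, r a.1 a.2)
    (ht : p.getLast? = some t) (hx : x ∈ p) : ReflTransGen r x t :=
  (isChain_iff_forall_mem_arcsOf.2 hp).backwards_induction (ReflTransGen r · t) p
    (fun _ _ hxy hyt => hyt.head hxy)
    (fun hne => by rw [List.getLast?_eq_some_getLast hne, Option.some.injEq] at ht; rw [ht]) x hx

end Chain

section Residual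

variable {E : Set (V × V)} {f : List (List V)} {s t : V}

theorem mem_usedArcs_of_mem_arcsOf {p : List V} {a : V × V} (hp : p ∈ f) (ha : a ∈ arcsOf p) :
    a ∈ usedArcs f :=
  List.mem_flatten.2 ⟨_, List.mem_map_of_mem hp, ha⟩

theorem swap_mem_residualGraph {a : V × V} (ha : a ∈ usedArcs f) :
    a.swap ∈ residualGraph E f :=
  Or.inr ⟨a, ha, rfl⟩

theorem reflTransGen_residualGraph_of_mem (hpaths : ∀ p ∈ f, IsPath E s t p)
    (haug : ReflTransGen (fun a b : V => (a, b) ∈ residualGraph E f) s t) {a b : V}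
    (hab : (a, b) ∈ E) : ReflTransGen (fun a b : V => (a, b) ∈ residualGraph E f) a b := by
  by_cases hused : (a, b) ∈ usedArcs f
  case neg => exact .single (Or.inl ⟨hab, hused⟩)
  obtain ⟨_, hmap, habp⟩ := List.mem_flatten.1 hused
  obtain ⟨p, hp, rfl⟩ := List.mem_map.1 hmap
  obtain ⟨hs, ht, -⟩ := hpaths p hp
  have hreversed : ∀ c ∈ arcsOf p,
      Function.swap (fun a b : V => (a, b) ∈ residualGraph E f) c.1 c.2 := fun c hc =>
    swap_mem_residualGraph (mem_usedArcs_of_mem_arcsOf hp hc)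
  have ha : a ∈ p := (List.of_mem_zip habp).1
  have hb : b ∈ p := List.mem_of_mem_tail (List.of_mem_zip habp).2
  have has := reflTransGen_swap.1 (reflTransGen_of_head?_of_mem hreversed hs ha)
  have htb := reflTransGen_swap.1 (reflTransGen_of_getLast?_of_mem hreversed ht hb)
  exact (has.trans haug).trans htb

end Residual

theorem residual_strongly_connected_general (E : Set (V × V)) (s t : V)
    (hsc : StronglyConnected E)
    (f : List (List V)) (hpaths : ∀ p ∈ f, IsPath E s t p)
    (haug : Relation.ReflTransGen (fun a b : V => (a, b) ∈ residualGraph E f) s t) :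
    StronglyConnected (residualGraph E f) := fun u v =>
  reflTransGen_closed (fun _ _ => reflTransGen_residualGraph_of_mem hpaths haug) u v (hsc u v)

/-- **Lemma 1.3.** Let `G = (V, E)` be strongly connected with `(t, s) ∈ E`, `s ≠ t`,
and let `f` be a finite collection of pairwise arc-disjoint directed paths from `s`
to `t`, none of which uses the arc `(t, s)`. If there is a directed path from `s` to
`t` in the residual graph `G_f`, then `G_f` is strongly connected. -/
theorem residual_strongly_connected [Fintype V] (E : Set (V × V)) (s t : V)
    (hst : s ≠ t) (hsc : StronglyConnected E) (hts : (t, s) ∈ E)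
    (f : List (List V)) (hpaths : ∀ p ∈ f, IsPath E s t p)
    (hdisj : ((f.map arcsOf).flatten).Nodup)
    (hnots : (t, s) ∉ (f.map arcsOf).flatten)
    (haug : Relation.ReflTransGen (fun a b : V => (a, b) ∈ residualGraph E f) s t) :
    StronglyConnected (residualGraph E f) :=
  residual_strongly_connected_general E s t hsc f hpaths haug
end

section
/- Let x₁, x₂ ∈ ℝ and define w_i = 1/(max{x_i, 0} + 1) for i ∈ {1,2}. For any parameter 0 ≤ δ < 1, if |x₁ − x₂| ≤ δ/w₁, then w₁/(1+δ) ≤ w₂ ≤ w₁/(1−δ). -/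
/-! The weight is `w = u⁻¹` with `u = max x 0 + 1 ≥ 1`, and `x ↦ max x 0` is 1-Lipschitz, so the
hypothesis says `|u₁ - u₂| ≤ δ u₁`: the denominators are within a relative error `δ` of each other,
which inverts to the two bounds on `w₂`. -/

theorem inv_div_one_add_le_inv_of_abs_sub_le {u v δ : ℝ} (hu : 0 < u) (hδ : δ < 1)
    (h : |u - v| ≤ δ * u) : u⁻¹ / (1 + δ) ≤ v⁻¹ := by
  have hv : v ≤ (1 + δ) * u := by linarith [neg_abs_le (u - v)]
  have hv0 : 0 < v := by nlinarith [le_abs_self (u - v)]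
  rw [div_eq_mul_inv, ← mul_inv, mul_comm]
  exact inv_anti₀ hv0 hv

theorem inv_le_inv_div_one_sub_of_abs_sub_le {u v δ : ℝ} (hu : 0 < u) (hδ : δ < 1)
    (h : |u - v| ≤ δ * u) : v⁻¹ ≤ u⁻¹ / (1 - δ) := by
  have hv : (1 - δ) * u ≤ v := by linarith [le_abs_self (u - v)]
  rw [div_eq_mul_inv, ← mul_inv, mul_comm]
  exact inv_anti₀ (by nlinarith) hv

theorem stability_general (x₁ x₂ δ : ℝ) (w₁ w₂ : ℝ)
    (hw₁ : w₁ = 1 / (max x₁ 0 + 1)) (hw₂ : w₂ = 1 / (max x₂ 0 + 1))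
    (hδ1 : δ < 1) (h : |x₁ - x₂| ≤ δ / w₁) :
    w₁ / (1 + δ) ≤ w₂ ∧ w₂ ≤ w₁ / (1 - δ) := by
  rw [one_div] at hw₁ hw₂
  subst hw₁ hw₂
  have hu : 0 < max x₁ 0 + 1 := by positivity
  have hclose : |(max x₁ 0 + 1) - (max x₂ 0 + 1)| ≤ δ * (max x₁ 0 + 1) := by
    rw [add_sub_add_right_eq_sub, ← div_inv_eq_mul]
    exact (abs_max_sub_max_le_abs x₁ x₂ 0).trans h
  exact ⟨inv_div_one_add_le_inv_of_abs_sub_le hu hδ1 hclose,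
    inv_le_inv_div_one_sub_of_abs_sub_le hu hδ1 hclose⟩

/-- **Stability (Lemma: Stability).**
For `x₁ x₂ : ℝ` with weights `wᵢ = 1/(max xᵢ 0 + 1)` and `0 ≤ δ < 1`,
if `|x₁ - x₂| ≤ δ / w₁` then `w₁/(1+δ) ≤ w₂ ≤ w₁/(1-δ)`. -/
theorem stability (x₁ x₂ δ : ℝ) (w₁ w₂ : ℝ)
    (hw₁ : w₁ = 1 / (max x₁ 0 + 1)) (hw₂ : w₂ = 1 / (max x₂ 0 + 1))
    (hδ0 : 0 ≤ δ) (hδ1 : δ < 1) (h : |x₁ - x₂| ≤ δ / w₁) :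
    w₁ / (1 + δ) ≤ w₂ ∧ w₂ ≤ w₁ / (1 - δ) :=
  stability_general x₁ x₂ δ w₁ w₂ hw₁ hw₂ hδ1 h
end

section
/- Let M > 0, let V be a finite vertex set with a potential function y : V → ℝ, and let v₀, v₁, …, v_k (k ≥ 1) be a sequence of vertices such that |y(v_{i+1}) − y(v_i)| ≤ M for every 0 ≤ i < k. Define the energy of an ordered pair (u,v) as E(u,v) = ∫_{y(v)−y(u)}^M 1/(max{x,0}+1) dx. Then Σ_{i=0}^{k−1} ( E(v_{i+1}, v_i) − E(v_i, v_{i+1}) ) ≤ y(v_k) − y(v₀) + k·ln(M+1). -/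
/-!
The energy density `g x = 1 / (max x 0 + 1)` has the primitive
`G x = min x 0 + log (max x 0 + 1)`, so flipping an arc whose potential difference is `d`
changes the energy by `∫_{-d}^{d} g = G d - G (-d)`. The `min` parts contribute exactly `d`,
which telescopes along the path to `y (v k) - y (v 0)`, and the `log` parts contribute at most
`log (max d 0 + 1) ≤ log (M + 1)`.
-/

open MeasureTheory Real

noncomputable section

def energyDensity (x : ℝ) : ℝ := 1 / (max x 0 + 1)

def energyPrimitive (x : ℝ) : ℝ := min x 0 + log (max x 0 + 1)

lemma max_zero_add_one_pos (x : ℝ) : 0 < max x 0 + 1 := by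
  positivity

lemma continuous_energyDensity : Continuous energyDensity :=
  continuous_const.div ((continuous_id.max continuous_const).add continuous_const)
    fun x => (max_zero_add_one_pos x).ne'

lemma integral_zero_energyDensity (b : ℝ) :
    ∫ x in (0 : ℝ)..b, energyDensity x = energyPrimitive b := by
  rcases le_total 0 b with hb | hb
  · have hpos : ∀ x ∈ Set.uIcc (0 : ℝ) b, energyDensity x = 1 / (x + 1) := by
      intro x hx
      rw [Set.uIcc_of_le hb] at hx
      simp only [energyDensity, max_eq_left hx.1]
    rw [intervalIntegral.integral_congr hpos, intervalIntegral.integral_comp_add_right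
      (fun x => 1 / x), integral_one_div (by simp [Set.uIcc_of_le, hb])]
    simp [energyPrimitive, hb]
  · have hneg : ∀ x ∈ Set.uIcc (0 : ℝ) b, energyDensity x = 1 := by
      intro x hx
      rw [Set.uIcc_of_ge hb] at hx
      simp [energyDensity, max_eq_right hx.2]
    rw [intervalIntegral.integral_congr hneg]
    simp [energyPrimitive, hb]

lemma integral_energyDensity (a b : ℝ) :
    ∫ x in a..b, energyDensity x = energyPrimitive b - energyPrimitive a := by
  rw [← intervalIntegral.integral_interval_sub_left
      (continuous_energyDensity.intervalIntegrable 0 b)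
      (continuous_energyDensity.intervalIntegrable 0 a),
    integral_zero_energyDensity, integral_zero_energyDensity]

lemma energyPrimitive_sub_energyPrimitive_neg_le {M d : ℝ} (hd : |d| ≤ M) :
    energyPrimitive d - energyPrimitive (-d) ≤ d + log (M + 1) := by
  have hmin : min d 0 - min (-d) 0 = d := by
    rcases le_total d 0 with h | h <;> simp [h]
  have hlog_le : log (max d 0 + 1) ≤ log (M + 1) :=
    log_le_log (max_zero_add_one_pos d)
      (by linarith [max_le (le_abs_self d) (abs_nonneg d)])
  have hlog_nonneg : 0 ≤ log (max (-d) 0 + 1) :=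
    log_nonneg (by linarith [le_max_right (-d) 0])
  unfold energyPrimitive
  linarith

lemma energy_flip_sub_le {M d : ℝ} (hd : |d| ≤ M) :
    (∫ x in (-d)..M, energyDensity x) - ∫ x in d..M, energyDensity x ≤ d + log (M + 1) := by
  rw [integral_energyDensity, integral_energyDensity]
  linarith [energyPrimitive_sub_energyPrimitive_neg_le hd]

end

theorem energy_increase_path_general {V : Type*} (M : ℝ)
    (y : V → ℝ) (k : ℕ) (v : ℕ → V)
    (hbound : ∀ i < k, |y (v (i + 1)) - y (v i)| ≤ M) :
    ∑ i ∈ Finset.range k,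
        ((∫ x in (y (v i) - y (v (i + 1)))..M, 1 / (max x 0 + 1)) -
          (∫ x in (y (v (i + 1)) - y (v i))..M, 1 / (max x 0 + 1)))
      ≤ y (v k) - y (v 0) + k * Real.log (M + 1) := by
  calc _ ≤ ∑ i ∈ Finset.range k, ((y (v (i + 1)) - y (v i)) + log (M + 1)) := by
        refine Finset.sum_le_sum fun i hi => ?_
        have := energy_flip_sub_le (hbound i (Finset.mem_range.mp hi))
        rwa [neg_sub] at this
    _ = y (v k) - y (v 0) + k * log (M + 1) := by
        rw [Finset.sum_add_distrib, Finset.sum_range_sub (fun i => y (v i)),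
          Finset.sum_const, Finset.card_range, nsmul_eq_mul]

/-- **Energy increase along a flipped path.** For `M > 0`, a potential function
`y : V → ℝ` on a finite vertex set, and a sequence of vertices `v 0, v 1, …, v k`
(`k ≥ 1`) with `|y (v (i+1)) - y (v i)| ≤ M` for all `i < k`, the total change in
energy when every arc `(v i, v (i+1))` is flipped to `(v (i+1), v i)` is at most
`y (v k) - y (v 0) + k·ln(M+1)`, where the energy of an ordered pair `(u, w)` is
`E(u, w) = ∫_{y w - y u}^M 1/(max x 0 + 1) dx`. -/
theorem energy_increase_path {V : Type*} [Fintype V] (M : ℝ) (hM : 0 < M)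
    (y : V → ℝ) (k : ℕ) (hk : 1 ≤ k) (v : ℕ → V)
    (hbound : ∀ i < k, |y (v (i + 1)) - y (v i)| ≤ M) :
    ∑ i ∈ Finset.range k,
        ((∫ x in (y (v i) - y (v (i + 1)))..M, 1 / (max x 0 + 1)) -
          (∫ x in (y (v (i + 1)) - y (v i))..M, 1 / (max x 0 + 1)))
      ≤ y (v k) - y (v 0) + k * Real.log (M + 1) :=
  energy_increase_path_general M y k v hbound
end

section
/- Let V be a finite vertex set, E ⊆ V × V a finite arc set, U ≥ 1, and u : E → ℝ a weight function with u(e) ∈ [1/U, U] for every arc e. For each integer i, let H_i ⊆ E be the set of arcs whose weight lies in the interval [2^i, 2^{i+1}). Let β ≥ 1 and let S ⊆ V satisfy β·u(∂⁺S) ≥ u(∂S). Then there exists an integer i such that |∂⁺_{H_i}S| ≥ (1/(2β))·|∂_{H_i}S|, where the boundaries are taken with respect to the arcs in H_i. -/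
open Finset

open scoped Classical in
/-- The out-boundary `∂⁺S`: arcs `(u,v) ∈ E` with `u ∈ S` and `v ∉ S`. -/
noncomputable def outBoundary {V : Type*} (E : Finset (V × V)) (S : Finset V) :
    Finset (V × V) :=
  E.filter fun e => e.1 ∈ S ∧ e.2 ∉ S

open scoped Classical in
/-- The boundary `∂S`: arcs `(u,v) ∈ E` with exactly one endpoint in `S`. -/
noncomputable def boundary {V : Type*} (E : Finset (V × V)) (S : Finset V) :
    Finset (V × V) :=
  E.filter fun e => (e.1 ∈ S ∧ e.2 ∉ S) ∨ (e.2 ∈ S ∧ e.1 ∉ S)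

open scoped Classical in
/-- The bucket `H_i ⊆ E` of arcs whose weight lies in `[2^i, 2^(i+1))`. -/
noncomputable def bucket {V : Type*} (E : Finset (V × V)) (u : V × V → ℝ) (i : ℤ) :
    Finset (V × V) :=
  E.filter fun e => (2 : ℝ) ^ i ≤ u e ∧ u e < (2 : ℝ) ^ (i + 1)

/-! Were every bucket to violate the bound, then, since weights inside `H_i` lie within a factor
`2` of `2^i`, each bucket would satisfy `β·u(∂⁺_{H_i}S) < u(∂_{H_i}S)`. The weights are positive,
so the buckets are the fibres of `e ↦ ⌊log₂ u(e)⌋` on `E`, and summing over them contradicts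
`β·u(∂⁺S) ≥ u(∂S)`. -/

theorem Int.zpow_le_and_lt_zpow_succ_iff_log_eq {R : Type*} [Field R] [LinearOrder R]
    [IsStrictOrderedRing R] [FloorRing R] {b : ℕ} (hb : 1 < b) {r : R} (hr : 0 < r) (i : ℤ) :
    ((b : R) ^ i ≤ r ∧ r < (b : R) ^ (i + 1)) ↔ Int.log b r = i := by
  rw [Int.zpow_le_iff_le_log hb hr, Int.lt_zpow_iff_log_lt hb hr]
  omega

theorem Finset.mul_sum_lt_sum_of_forall_fiber {α ι R : Type*} [DecidableEq ι] [Nonempty ι]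
    [Semiring R] [PartialOrder R] [IsOrderedCancelAddMonoid R]
    {s t : Finset α} (f : α → ι) (w : α → R) (c : R)
    (h : ∀ i, c * ∑ a ∈ s with f a = i, w a < ∑ a ∈ t with f a = i, w a) :
    c * ∑ a ∈ s, w a < ∑ a ∈ t, w a := by
  classical
  have hI : ((s ∪ t).image f).Nonempty := by
    rw [image_nonempty, nonempty_iff_ne_empty]
    intro hst
    obtain ⟨rfl, rfl⟩ := union_eq_empty.1 hst
    simpa using h (Classical.arbitrary ι)
  rw [← sum_fiberwise_of_maps_to (t := (s ∪ t).image f) (g := f)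
      (fun a ha => mem_image_of_mem f (mem_union_left t ha)),
    ← sum_fiberwise_of_maps_to (t := (s ∪ t).image f) (g := f)
      (fun a ha => mem_image_of_mem f (mem_union_right s ha)), mul_sum]
  exact sum_lt_sum_of_nonempty hI fun i _ => h i

theorem Finset.mul_sum_lt_sum_of_two_mul_card_lt {α R : Type*} [CommSemiring R]
    [PartialOrder R] [IsStrictOrderedRing R] {s t : Finset α} {w : α → R} {c β : R} (hc : 0 < c) (hβ : 0 ≤ β) (hs : ∀ a ∈ s, w a ≤ 2 * c) (ht : ∀ a ∈ t, c ≤ w a)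
    (hcard : 2 * β * #s < #t) :
    β * ∑ a ∈ s, w a < ∑ a ∈ t, w a :=
  calc β * ∑ a ∈ s, w a ≤ β * (#s * (2 * c)) := by
        gcongr; simpa using sum_le_sum hs
    _ = c * (2 * β * #s) := by ring
    _ < c * #t := by gcongr
    _ ≤ ∑ a ∈ t, w a := by simpa [mul_comm] using sum_le_sum ht

section Boundary

variable {V : Type*} (E : Finset (V × V)) (S : Finset V) (p : V × V → Prop) [DecidablePred p]

theorem outBoundary_filter : outBoundary (E.filter p) S = (outBoundary E S).filter p := by
  classical
  unfold outBoundary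
  rw [filter_comm]

theorem boundary_filter : boundary (E.filter p) S = (boundary E S).filter p := by
  classical
  unfold boundary
  rw [filter_comm]

end Boundary

theorem bucket_eq_filter_log {V : Type*} {E : Finset (V × V)} {u : V × V → ℝ}
    (hu : ∀ e ∈ E, 0 < u e) (i : ℤ) :
    bucket E u i = E.filter fun e => Int.log 2 (u e) = i := by
  unfold bucket
  refine filter_congr fun e he => ?_
  exact_mod_cast Int.zpow_le_and_lt_zpow_succ_iff_log_eq one_lt_two (hu e he) i

theorem bucket_balanced_cut_general {V : Type*}
    (E : Finset (V × V)) (U : ℝ) (hU : 1 ≤ U) (u : V × V → ℝ)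
    (hu : ∀ e ∈ E, u e ∈ Set.Icc (1 / U) U)
    (β : ℝ) (hβ : 1 ≤ β) (S : Finset V)
    (hcut : β * ∑ e ∈ outBoundary E S, u e ≥ ∑ e ∈ boundary E S, u e) :
    ∃ i : ℤ, ((outBoundary (bucket E u i) S).card : ℝ)
      ≥ (1 / (2 * β)) * ((boundary (bucket E u i) S).card : ℝ) := by
  have hpos : ∀ e ∈ E, 0 < u e := fun e he =>
    (one_div_pos.2 (by linarith)).trans_le (hu e he).1
  have hβ0 : 0 < β := by linarith
  classical
  by_contra! hsmall
  refine hcut.not_gt (mul_sum_lt_sum_of_forall_fiber (fun e => Int.log 2 (u e)) u β fun i => ?_)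
  rw [← outBoundary_filter, ← boundary_filter, ← bucket_eq_filter_log hpos]
  have hweight : ∀ e ∈ bucket E u i, (2 : ℝ) ^ i ≤ u e ∧ u e < 2 * 2 ^ i := fun e he => by
    simpa [bucket, zpow_add_one₀, mul_comm] using (mem_filter.1 he).2
  refine mul_sum_lt_sum_of_two_mul_card_lt (by positivity) hβ0.le
    (fun e he => (hweight e (mem_filter.1 he).1).2.le)
    (fun e he => (hweight e (mem_filter.1 he).1).1) ?_
  have hcard := hsmall i
  rw [one_div, ← div_eq_inv_mul, lt_div_iff₀ (by positivity)] at hcard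
  linarith

/-- **Bucketing reduction to unweighted graphs.** Let `u : E → ℝ` be arc weights in
`[1/U, U]` with `U ≥ 1`, and for `i : ℤ` let `H_i` be the arcs of weight in
`[2^i, 2^(i+1))`. If `β ≥ 1` and `S ⊆ V` satisfies `β·u(∂⁺S) ≥ u(∂S)`, then some
bucket `H_i` satisfies `|∂⁺_{H_i}S| ≥ (1/(2β))·|∂_{H_i}S|`. -/
theorem bucket_balanced_cut {V : Type*} [Fintype V]
    (E : Finset (V × V)) (U : ℝ) (hU : 1 ≤ U) (u : V × V → ℝ)
    (hu : ∀ e ∈ E, u e ∈ Set.Icc (1 / U) U)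
    (β : ℝ) (hβ : 1 ≤ β) (S : Finset V)
    (hcut : β * ∑ e ∈ outBoundary E S, u e ≥ ∑ e ∈ boundary E S, u e) :
    ∃ i : ℤ, ((outBoundary (bucket E u i) S).card : ℝ)
      ≥ (1 / (2 * β)) * ((boundary (bucket E u i) S).card : ℝ) :=
  bucket_balanced_cut_general E U hU u hu β hβ S hcut
end
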